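/- Let Θ be an inner function with values in L(E), let Θ̃(z) = Θ(z̄)*, and let τ be the unitary operator from K_Θ onto K_Θ̃ given by (τf)(e^{it}) = e^{-it} Θ(e^{-it})* f(e^{-it}). Then τ T_Θ τ* ⊆ T_Θ̃: for every bounded operator A ∈ T_Θ, the operator τ A τ* on K_Θ̃ belongs to T_Θ̃. -/

import Mathlib

open MeasureTheory Complex ContinuousLinearMap
open scoped ComplexInnerProductSpace

noncomputable section

/-- The circle `𝕋`, realized as `ℝ / 2πℤ`; the point `t` corresponds to `e^{it}`. -/
abbrev Circle2pi : Type := AddCircle (2 * Real.pi)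

instance : Fact (0 < 2 * Real.pi) := ⟨by positivity⟩

/-- Normalized Haar (arc-length) measure on the circle. -/
abbrev haarCircle2pi : Measure Circle2pi := AddCircle.haarAddCircle

variable {E : Type} [NormedAddCommGroup E] [InnerProductSpace ℂ E] [FiniteDimensional ℂ E]

/-- `Θ`, given by its boundary-value function on the circle, is an inner function: it is
(a.e. strongly) measurable, its boundary values are a.e. unitary operators on `E`, and its
Fourier coefficients of negative index vanish (the latter says exactly that `Θ` is the
boundary-value function of a bounded analytic `L(E)`-valued function on the unit disc,
i.e. an element of `H^∞(L(E))`). -/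
structure IsInner (Θ : Circle2pi → (E →L[ℂ] E)) : Prop where
  meas : AEStronglyMeasurable Θ haarCircle2pi
  unit : ∀ᵐ t ∂haarCircle2pi, Θ t ∈ unitary (E →L[ℂ] E)
  anal : ∀ n : ℤ, n < 0 → fourierCoeff Θ n = 0

/-- Membership in the Hardy space `H²(E)`, viewed as the subspace of `L²(E)` of functions
whose Fourier coefficients of negative index vanish. -/
def MemH2 (f : Lp E 2 haarCircle2pi) : Prop :=
  ∀ n : ℤ, n < 0 → fourierCoeff (⇑f) n = 0

/-- Membership in the model space `K_Θ = H²(E) ⊖ Θ H²(E)`: `f` belongs to `H²(E)` and is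
orthogonal to `Θ H²(E)`. -/
def MemK (Θ : Circle2pi → (E →L[ℂ] E)) (f : Lp E 2 haarCircle2pi) : Prop :=
  MemH2 f ∧ ∀ g : Lp E 2 haarCircle2pi, MemH2 g →
    ∫ t, ⟪f t, Θ t (g t)⟫ ∂haarCircle2pi = 0

/-- The boundary values of `Θ̃(z) = Θ(z̄)*`, namely `Θ̃(e^{it}) = Θ(e^{-it})*`. -/
def tild (Θ : Circle2pi → (E →L[ℂ] E)) : Circle2pi → (E →L[ℂ] E) :=
  fun t => adjoint (Θ (-t))

/-- `τ` is the operator on `L²(E)` given by `(τ f)(e^{it}) = e^{-it} Θ(e^{-it})* f(e^{-it})`. -/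
def IsTau (Θ : Circle2pi → (E →L[ℂ] E))
    (τ : Lp E 2 haarCircle2pi →L[ℂ] Lp E 2 haarCircle2pi) : Prop :=
  ∀ f : Lp E 2 haarCircle2pi,
    (⇑(τ f)) =ᵐ[haarCircle2pi] fun t => fourier (-1) t • (adjoint (Θ (-t))) (f (-t))

/-- `P` is the orthogonal projection of `L²(E)` onto the model space `K_Θ`:
its range lies in `K_Θ`, it fixes `K_Θ`, and `f - P f` is orthogonal to `K_Θ`. -/
def IsProjK (Θ : Circle2pi → (E →L[ℂ] E))
    (P : Lp E 2 haarCircle2pi →L[ℂ] Lp E 2 haarCircle2pi) : Prop :=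
  (∀ f, MemK Θ (P f)) ∧ (∀ f, MemK Θ f → P f = f) ∧
    ∀ f g, MemK Θ g → ⟪f - P f, g⟫ = 0

/-- `S` acts on the model space `K_Θ` as the compressed shift `S_Θ f = P_Θ (z f)`:
for `f ∈ K_Θ`, `S f ∈ K_Θ` and `S f - z f` is orthogonal to `K_Θ`, i.e.
`⟪S f, g⟫ = ⟪z f, g⟫` for all `g ∈ K_Θ`. -/
def IsCompShift (Θ : Circle2pi → (E →L[ℂ] E))
    (S : Lp E 2 haarCircle2pi →L[ℂ] Lp E 2 haarCircle2pi) : Prop :=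
  ∀ f, MemK Θ f → MemK Θ (S f) ∧
    ∀ g, MemK Θ g → ⟪S f, g⟫ = ∫ t, ⟪fourier 1 t • f t, g t⟫ ∂haarCircle2pi

/-- `A` acts on the model space `K_Θ` as the adjoint `S_Θ*` of the compressed shift `S`:
for `f ∈ K_Θ`, `A f ∈ K_Θ` and `⟪A f, g⟫ = ⟪f, S g⟫` for all `g ∈ K_Θ`. -/
def IsCompShiftAdj (Θ : Circle2pi → (E →L[ℂ] E))
    (S A : Lp E 2 haarCircle2pi →L[ℂ] Lp E 2 haarCircle2pi) : Prop :=
  ∀ f, MemK Θ f → MemK Θ (A f) ∧ ∀ g, MemK Θ g → ⟪A f, g⟫ = ⟪f, S g⟫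

/-- The subspace `D = {(I - Θ(z) Θ(0)*) x : x ∈ E}` of `K_Θ`, described through boundary
values; here `Θ(0)` is the 0-th Fourier coefficient of `Θ`. -/
def DSet (Θ : Circle2pi → (E →L[ℂ] E)) : Set (Lp E 2 haarCircle2pi) :=
  {f | ∃ x : E, (⇑f) =ᵐ[haarCircle2pi]
    fun t => x - Θ t (adjoint (fourierCoeff Θ 0) x)}

/-- The subspace `D_* = {(1/z)(Θ(z) - Θ(0)) x : x ∈ E}` of `K_Θ`, described through
boundary values. -/
def DStarSet (Θ : Circle2pi → (E →L[ℂ] E)) : Set (Lp E 2 haarCircle2pi) :=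
  {f | ∃ x : E, (⇑f) =ᵐ[haarCircle2pi]
    fun t => fourier (-1) t • (Θ t x - fourierCoeff Θ 0 x)}

/-- `A` is a matrix-valued truncated Toeplitz operator on `K_Θ`, i.e. `A ∈ T_Θ`: there is a
symbol `Φ ∈ L²(L(E))` such that `A f = P_Θ (Φ f)` for every `f` in
`K_Θ^∞ = K_Θ ∩ H^∞(E)`; the compression is expressed by: `A f ∈ K_Θ` and
`⟪A f, g⟫ = ⟪Φ f, g⟫` for every `g ∈ K_Θ`. -/
def MemTT (Θ : Circle2pi → (E →L[ℂ] E))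
    (A : Lp E 2 haarCircle2pi →L[ℂ] Lp E 2 haarCircle2pi) : Prop :=
  ∃ Φ : Circle2pi → (E →L[ℂ] E), MemLp Φ 2 haarCircle2pi ∧
    ∀ f, MemK Θ f → MemLp (⇑f) ⊤ haarCircle2pi →
      MemK Θ (A f) ∧ ∀ g, MemK Θ g → ⟪A f, g⟫ = ∫ t, ⟪Φ t (f t), g t⟫ ∂haarCircle2pi

/-!
A function `f ∈ H²(E)` lies in `K_Θ` iff `Θ* f` has no Fourier coefficients of index `≥ 0`
(test against `Θ e^{int} x`, and conversely use Parseval). The coefficients of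
`τ f = z̄ Θ(z̄)* f(z̄)` are those of `Θ* f` reflected to `-n - 1`, and `Θ̃* τ f = z̄ f(z̄)`, so `τ`
exchanges the two conditions and maps `K_Θ` into `K_Θ̃`. A change of variables `t ↦ -t` shows
that `τ*` is the `τ`-operator of `Θ̃`, hence maps `K_Θ̃` into `K_Θ`, and boundedness is preserved
since `Θ` is unitary a.e. Finally, for `f, g ∈ K_Θ̃`,
`⟪τ A τ* f, g⟫ = ⟪Φ τ* f, τ* g⟫ = ⟪Ψ f, g⟫` with `Ψ(z) = Θ(z̄)* Φ(z̄) Θ(z̄)` (again `t ↦ -t`),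
and `Ψ ∈ L²` because conjugation by a unitary preserves the norm.
-/

open AddCircle

theorem ae_comp_neg {G : Type*} [MeasurableSpace G] [Neg G] [MeasurableNeg G] {ν : Measure G}
    [ν.IsNegInvariant] {p : G → Prop} (h : ∀ᵐ t ∂ν, p t) : ∀ᵐ t ∂ν, p (-t) :=
  (Measure.measurePreserving_neg ν).quasiMeasurePreserving.ae h

section FourierCoeff

variable {T : ℝ}

theorem fourier_apply_neg (n : ℤ) (t : AddCircle T) : fourier n (-t) = fourier (-n) t := by
  rw [fourier_apply, smul_neg, fourier_neg', ← fourier_neg]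

variable [Fact (0 < T)] {F : Type*} [NormedAddCommGroup F] [NormedSpace ℂ F]

theorem fourierCoeff_comp_neg (f : AddCircle T → F) (n : ℤ) :
    fourierCoeff (fun t => f (-t)) n = fourierCoeff f (-n) := by
  rw [fourierCoeff, fourierCoeff, ← integral_neg_eq_self]
  simp only [neg_neg, fourier_apply_neg]

theorem fourierCoeff_fourier_smul (m : ℤ) (f : AddCircle T → F) (n : ℤ) :
    fourierCoeff (fun t => fourier m t • f t) n = fourierCoeff f (n - m) := by
  simp only [fourierCoeff, smul_smul, ← fourier_add, neg_sub, neg_add_eq_sub]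

theorem fourierCoeff_fourier_neg_one_smul_comp_neg (f : AddCircle T → F) (n : ℤ) :
    fourierCoeff (fun t => fourier (-1) t • f (-t)) n = fourierCoeff f (-(n + 1)) := by
  rw [fourierCoeff_fourier_smul, fourierCoeff_comp_neg, sub_neg_eq_add]

theorem ContinuousLinearMap.fourierCoeff_comp [CompleteSpace F] {G : Type*}
    [NormedAddCommGroup G] [NormedSpace ℂ G] [CompleteSpace G] (L : F →L[ℂ] G)
    {f : AddCircle T → F} (hf : Integrable f haarAddCircle) (n : ℤ) :
    fourierCoeff (fun t => L (f t)) n = L (fourierCoeff f n) := by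
  simp only [fourierCoeff, ← L.integral_comp_comm (hf.fourier_smul _), map_smul]

theorem fourierCoeff_fourier_smul_const [CompleteSpace F] (m n : ℤ) (x : F) :
    fourierCoeff (fun t : AddCircle T => fourier m t • x) n = if n = m then x else 0 := by
  have hint : Integrable (fun t : AddCircle T => (fourier m t : ℂ)) haarAddCircle :=
    ((integrable_const (1 : ℂ)).fourier_smul m).congr (by simp)
  rw [show (fun t : AddCircle T => fourier m t • x) = fun t => toSpanSingleton ℂ x (fourier m t)
    from rfl, (toSpanSingleton ℂ x).fourierCoeff_comp hint, fourierCoeff_fourier]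
  split_ifs with h <;> simp [h]

theorem MeasureTheory.MemLp.fourier_smul {p : ENNReal} {f : AddCircle T → F}
    (hf : MemLp f p AddCircle.haarAddCircle) (n : ℤ) :
    MemLp (fun t => fourier n t • f t) p AddCircle.haarAddCircle :=
  hf.of_le ((map_continuous (fourier n)).aestronglyMeasurable.smul hf.1)
    (ae_of_all _ fun t => by rw [norm_smul, fourier_apply, Circle.norm_coe, one_mul])

theorem inner_eq_zero_of_fourierCoeff (u v : Lp ℂ 2 (haarAddCircle (T := T)))
    (h : ∀ n, fourierCoeff u n = 0 ∨ fourierCoeff v n = 0) : ⟪u, v⟫ = 0 := by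
  rw [← fourierBasis.tsum_inner_mul_inner u v]
  have hterm : ∀ n, ⟪u, fourierBasis n⟫ * ⟪fourierBasis n, v⟫ = 0 := fun n => by
    rw [← inner_conj_symm u, ← fourierBasis.repr_apply_apply, ← fourierBasis.repr_apply_apply,
      fourierBasis_repr, fourierBasis_repr]
    rcases h n with h | h <;> simp [h]
  simp only [hterm, tsum_zero]

theorem inner_eq_zero_of_fourierCoeff_of_finiteDimensional
    (u v : Lp E 2 (haarAddCircle (T := T)))
    (h : ∀ n, fourierCoeff u n = 0 ∨ fourierCoeff v n = 0) : ⟪u, v⟫ = 0 := by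
  set b := stdOrthonormalBasis ℂ E
  have hcoord : ∀ (w : Lp E 2 (haarAddCircle (T := T))) k n,
      fourierCoeff ((innerSL ℂ (b k)).compLp w) n = ⟪b k, fourierCoeff w n⟫ := fun w k n => by
    rw [fourierCoeff_congr_ae (coeFn_compLp' _ _),
      (innerSL ℂ (b k)).fourierCoeff_comp ((Lp.memLp w).integrable one_le_two)]
    rfl
  have hk : ∀ k, ⟪(innerSL ℂ (b k)).compLp u, (innerSL ℂ (b k)).compLp v⟫ = 0 := fun k =>
    inner_eq_zero_of_fourierCoeff _ _ fun n => by
      rw [hcoord, hcoord]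
      rcases h n with h | h <;> simp [h]
  calc ⟪u, v⟫ = ∑ k, ⟪(innerSL ℂ (b k)).compLp u, (innerSL ℂ (b k)).compLp v⟫ := by
        simp only [L2.inner_def]
        rw [← integral_finsetSum _ fun k _ => L2.integrable_inner _ _]
        refine integral_congr_ae ?_
        filter_upwards [ae_all_iff.2 fun k => coeFn_compLp' (innerSL ℂ (b k)) u,
          ae_all_iff.2 fun k => coeFn_compLp' (innerSL ℂ (b k)) v] with t hu hv
        simp [hu, hv, ← b.sum_inner_mul_inner (u t) (v t), mul_comm]
    _ = 0 := by simp [hk]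

end FourierCoeff

section ModelSpace

local notation "μ" => haarCircle2pi

variable {Θ : Circle2pi → (E →L[ℂ] E)}

theorem apply_adjoint_apply_of_mem_unitary {U : E →L[ℂ] E} (hU : U ∈ unitary (E →L[ℂ] E))
    (x : E) : U (adjoint U x) = x :=
  congr($(Unitary.mul_star_self_of_mem hU) x)

theorem tild_tild (Θ : Circle2pi → (E →L[ℂ] E)) : tild (tild Θ) = Θ := by
  funext t
  simp [tild]

theorem fourierCoeff_tild (Θ : Circle2pi → (E →L[ℂ] E)) (n : ℤ) :
    fourierCoeff (tild Θ) n = adjoint (fourierCoeff Θ n) := by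
  calc fourierCoeff (tild Θ) n
      = ∫ t, starL' ℝ (fourier (-n) (-t) • Θ (-t)) ∂μ := by
        simp [fourierCoeff, tild, star_smul, star_eq_adjoint]
    _ = adjoint (fourierCoeff Θ n) := by
        rw [ContinuousLinearEquiv.integral_comp_comm,
          integral_neg_eq_self (fun t => fourier (-n) t • Θ t)]
        rfl

theorem IsInner.tild (hΘ : IsInner Θ) : IsInner (tild Θ) where
  meas := (hΘ.meas.comp_measurePreserving (Measure.measurePreserving_neg μ)).star
  unit := (ae_comp_neg hΘ.unit).mono fun _ ht => Unitary.star_mem ht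
  anal n hn := by rw [fourierCoeff_tild, hΘ.anal n hn, map_zero]

theorem IsInner.memLp_adjoint_apply (hΘ : IsInner Θ) {p : ENNReal} {u : Circle2pi → E}
    (hu : MemLp u p μ) : MemLp (fun t => adjoint (Θ t) (u t)) p μ :=
  hu.of_le (isBoundedBilinearMap_apply.continuous.comp_aestronglyMeasurable
      (hΘ.meas.star.prodMk hu.1))
    (hΘ.unit.mono fun _ ht => (norm_map_of_mem_unitary (Unitary.star_mem ht) _).le)

def tauFun (Θ : Circle2pi → (E →L[ℂ] E)) (u : Circle2pi → E) : Circle2pi → E :=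
  fun t => fourier (-1) t • adjoint (Θ (-t)) (u (-t))

theorem tauFun_tild_apply (Θ : Circle2pi → (E →L[ℂ] E)) (u : Circle2pi → E) (t : Circle2pi) :
    tauFun (tild Θ) u t = fourier (-1) t • Θ t (u (-t)) := by
  simp [tauFun, tild]

theorem IsInner.memLp_tauFun (hΘ : IsInner Θ) {p : ENNReal} {u : Circle2pi → E}
    (hu : MemLp u p μ) : MemLp (tauFun Θ u) p μ :=
  ((hΘ.memLp_adjoint_apply hu).comp_measurePreserving
    (Measure.measurePreserving_neg μ)).fourier_smul (-1)

theorem integral_inner_tauFun_tild (Θ : Circle2pi → (E →L[ℂ] E)) (u v : Circle2pi → E) :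
    ∫ t, ⟪tauFun (tild Θ) u t, v t⟫ ∂μ = ∫ t, ⟪u t, tauFun Θ v t⟫ ∂μ := by
  rw [← integral_neg_eq_self]
  congr 1 with t
  rw [tauFun_tild_apply, tauFun, inner_smul_left, inner_smul_right, fourier_apply_neg,
    ← fourier_neg, neg_neg, neg_neg, adjoint_inner_right]

theorem IsInner.memK_iff (hΘ : IsInner Θ) (f : Lp E 2 μ) :
    MemK Θ f ↔ MemH2 f ∧ ∀ n : ℤ, 0 ≤ n → fourierCoeff (fun t => adjoint (Θ t) (f t)) n = 0 := by
  have hΘf := hΘ.memLp_adjoint_apply (Lp.memLp f)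
  refine and_congr_right fun _ => ⟨fun horth n hn => ?_, fun hcoeff g hg => ?_⟩
  · refine ext_inner_left ℂ fun x => ?_
    have hx := (memLp_const x : MemLp (fun _ : Circle2pi => x) 2 μ).fourier_smul n
    have hxH2 : MemH2 (hx.toLp _) := fun m hm => by
      rw [fourierCoeff_congr_ae hx.coeFn_toLp, fourierCoeff_fourier_smul_const, if_neg (by omega)]
    have horth_x : ∫ t, ⟪f t, Θ t (fourier n t • x)⟫ ∂μ = 0 := by
      rw [← horth _ hxH2]
      refine integral_congr_ae (hx.coeFn_toLp.mono fun t ht => ?_)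
      simp only [ht]
    rw [inner_zero_right, ← innerSL_apply_apply,
      ← (innerSL ℂ x).fourierCoeff_comp (hΘf.integrable one_le_two), fourierCoeff,
      ← map_eq_zero (starRingEnd ℂ), ← integral_conj, ← horth_x]
    congr 1 with t
    simp [adjoint_inner_right]
  · have hΘf_perp := inner_eq_zero_of_fourierCoeff_of_finiteDimensional (hΘf.toLp _) g fun n => by
      rcases le_or_gt 0 n with hn | hn
      · exact .inl ((congrFun (fourierCoeff_congr_ae hΘf.coeFn_toLp) n).trans (hcoeff n hn))
      · exact .inr (hg n hn)
    rw [L2.inner_def, integral_congr_ae (hΘf.coeFn_toLp.mono fun t ht => by rw [ht])] at hΘf_perp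
    simpa only [adjoint_inner_left] using hΘf_perp

variable {τ : Lp E 2 μ →L[ℂ] Lp E 2 μ}

theorem IsTau.memK_tild (hτ : IsTau Θ τ) (hΘ : IsInner Θ) {f : Lp E 2 μ} (hf : MemK Θ f) :
    MemK (tild Θ) (τ f) := by
  obtain ⟨hfH2, hΘf⟩ := (hΘ.memK_iff f).1 hf
  have hτf : ⇑(τ f) =ᵐ[μ] tauFun Θ f := hτ f
  refine (hΘ.tild.memK_iff _).2 ⟨fun n hn => ?_, fun n hn => ?_⟩
  · rw [fourierCoeff_congr_ae hτf]
    exact (fourierCoeff_fourier_neg_one_smul_comp_neg (fun t => adjoint (Θ t) (f t)) n).trans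
      (hΘf _ (by omega))
  · have hflip : (fun t => adjoint (tild Θ t) (τ f t)) =ᵐ[μ] fun t => fourier (-1) t • f (-t) := by
      filter_upwards [hτf, ae_comp_neg hΘ.unit] with t ht hu
      simp [ht, tauFun, tild, apply_adjoint_apply_of_mem_unitary hu]
    rw [fourierCoeff_congr_ae hflip, fourierCoeff_fourier_neg_one_smul_comp_neg]
    exact hfH2 _ (by omega)

theorem IsTau.isTau_tild_adjoint (hτ : IsTau Θ τ) (hΘ : IsInner Θ) :
    IsTau (tild Θ) (adjoint τ) := by
  intro g
  have hσ := hΘ.tild.memLp_tauFun (Lp.memLp g)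
  suffices adjoint τ g = hσ.toLp _ from this ▸ hσ.coeFn_toLp
  refine ext_inner_right ℂ fun h => ?_
  calc ⟪adjoint τ g, h⟫ = ∫ t, ⟪g t, tauFun Θ h t⟫ ∂μ := by
        rw [adjoint_inner_left, L2.inner_def]
        exact integral_congr_ae ((hτ h).mono fun t ht => congrArg (⟪g t, ·⟫) ht)
    _ = ∫ t, ⟪tauFun (tild Θ) g t, h t⟫ ∂μ := (integral_inner_tauFun_tild Θ g h).symm
    _ = ⟪hσ.toLp _, h⟫ := by
        rw [L2.inner_def]
        exact integral_congr_ae (hσ.coeFn_toLp.mono fun t ht => congrArg (⟪·, h t⟫) ht.symm)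

def tauSymbol (Θ Φ : Circle2pi → (E →L[ℂ] E)) : Circle2pi → (E →L[ℂ] E) :=
  fun t => adjoint (Θ (-t)) * Φ (-t) * Θ (-t)

theorem IsInner.memLp_tauSymbol (hΘ : IsInner Θ) {p : ENNReal} {Φ : Circle2pi → (E →L[ℂ] E)}
    (hΦ : MemLp Φ p μ) : MemLp (tauSymbol Θ Φ) p μ := by
  have hneg := Measure.measurePreserving_neg μ
  have hΘneg := hΘ.meas.comp_measurePreserving hneg
  refine (hΦ.comp_measurePreserving hneg).of_le
    ((hΘneg.star.mul (hΦ.1.comp_measurePreserving hneg)).mul hΘneg) ?_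
  filter_upwards [ae_comp_neg hΘ.unit] with t ht
  rw [tauSymbol, ← star_eq_adjoint, CStarRing.norm_mul_mem_unitary _ ht,
    CStarRing.norm_mem_unitary_mul _ (Unitary.star_mem ht)]
  rfl

theorem IsTau.integral_inner_tauSymbol {σ : Lp E 2 μ →L[ℂ] Lp E 2 μ} (hσ : IsTau (tild Θ) σ)
    (Φ : Circle2pi → (E →L[ℂ] E)) (f g : Lp E 2 μ) :
    ∫ t, ⟪Φ t (σ f t), σ g t⟫ ∂μ = ∫ t, ⟪tauSymbol Θ Φ t (f t), g t⟫ ∂μ := by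
  rw [← integral_neg_eq_self (fun t => ⟪tauSymbol Θ Φ t (f t), g t⟫)]
  refine integral_congr_ae ?_
  filter_upwards [hσ f, hσ g] with t hf hg
  rw [hf, hg, map_smul, inner_smul_left, inner_smul_right, ← mul_assoc, ← fourier_neg,
    ← fourier_add, neg_add_cancel, fourier_zero, one_mul]
  simp [tild, tauSymbol, adjoint_inner_left]

end ModelSpace

/-- Let `Θ` be inner, `Θ̃(z) = Θ(z̄)*`, and `τ` the unitary operator
`(τ f)(e^{it}) = e^{-it} Θ(e^{-it})* f(e^{-it})` mapping `K_Θ` onto `K_Θ̃`. Then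
`τ T_Θ τ* ⊆ T_Θ̃`: for every bounded operator `A ∈ T_Θ`, the operator `τ A τ*` on
`K_Θ̃` belongs to `T_Θ̃`. -/
theorem tau_TT_tau_adj_subset (Θ : Circle2pi → (E →L[ℂ] E)) (hΘ : IsInner Θ)
    (τ : Lp E 2 haarCircle2pi →L[ℂ] Lp E 2 haarCircle2pi) (hτ : IsTau Θ τ) :
    ∀ A : Lp E 2 haarCircle2pi →L[ℂ] Lp E 2 haarCircle2pi,
      (∀ f, MemK Θ f → MemK Θ (A f)) → MemTT Θ A →
      MemTT (tild Θ) (τ.comp (A.comp (adjoint τ))) := by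
  intro A _ ⟨Φ, hΦ, hAΦ⟩
  have hτ' := hτ.isTau_tild_adjoint hΘ
  have hK : ∀ f, MemK (tild Θ) f → MemK Θ (adjoint τ f) := fun f hf => by
    simpa only [tild_tild] using hτ'.memK_tild hΘ.tild hf
  refine ⟨tauSymbol Θ Φ, hΘ.memLp_tauSymbol hΦ, fun f hf hf_top => ?_⟩
  obtain ⟨hAf, hAfΦ⟩ := hAΦ _ (hK f hf) ((hΘ.tild.memLp_tauFun hf_top).ae_eq (hτ' f).symm)
  refine ⟨hτ.memK_tild hΘ hAf, fun g hg => ?_⟩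
  calc ⟪τ (A (adjoint τ f)), g⟫ = ⟪A (adjoint τ f), adjoint τ g⟫ :=
        (adjoint_inner_right τ _ _).symm
    _ = ∫ t, ⟪Φ t (adjoint τ f t), adjoint τ g t⟫ ∂haarCircle2pi := hAfΦ _ (hK g hg)
    _ = _ := hτ'.integral_inner_tauSymbol Φ f g
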